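/- arXiv:2202.13104 — 8 statements merged into one kernel-verified Lean document; each statement's English description precedes it below -/
import Mathlib

section
/- For every natural number n and every real x with 0 < x ≤ 1, ∑_{k=0}^{n} C(n,k) · x^k · (1−x)^{n−k} · (n−k)/(k+1) = ((1−x)/x) · (1 − (1−x)^{n}). -/
/-!
Absorption, `C(n,k) (n-k)/(k+1) = C(n,k+1)`, turns the `k`-th summand into `(1-x)/x` times the
binomial weight `C(n,k+1) x^(k+1) (1-x)^(n-k-1)`. The shifted weights sum to the full binomial sum
`(x + (1-x))^n = 1` minus the `k = 0` weight `(1-x)^n`.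
-/

open Finset

def binomialWeight {R : Type*} [CommRing R] (n : ℕ) (x : R) (k : ℕ) : R :=
  n.choose k * x ^ k * (1 - x) ^ (n - k)

section CommRing

variable {R : Type*} [CommRing R]

theorem sum_range_binomialWeight (n : ℕ) (x : R) :
    ∑ k ∈ range (n + 1), binomialWeight n x k = 1 := by
  have h := (add_pow x (1 - x) n).symm
  rw [add_sub_cancel, one_pow] at h
  rw [← h]
  exact sum_congr rfl fun k _ => by unfold binomialWeight; ring

theorem binomialWeight_eq_zero_of_lt {n k : ℕ} (x : R) (h : n < k) :
    binomialWeight n x k = 0 := by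
  simp [binomialWeight, Nat.choose_eq_zero_of_lt h]

theorem sum_range_binomialWeight_succ (n : ℕ) (x : R) :
    ∑ k ∈ range (n + 1), binomialWeight n x (k + 1) = 1 - (1 - x) ^ n := by
  have h := sum_range_succ' (binomialWeight n x) (n + 1)
  rw [sum_range_succ, sum_range_binomialWeight, binomialWeight_eq_zero_of_lt x n.lt_succ_self] at h
  have h0 : binomialWeight n x 0 = (1 - x) ^ n := by simp [binomialWeight]
  rw [h0] at h
  linear_combination -h

end CommRing

section Field

variable {K : Type*} [Field K] [CharZero K]

theorem cast_choose_mul_sub_div_succ (n k : ℕ) :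
    (n.choose k : K) * ((n - k) / (k + 1)) = n.choose (k + 1) := by
  rcases le_or_gt k n with hk | hk
  · rw [mul_div_assoc', div_eq_iff (Nat.cast_add_one_ne_zero k), ← Nat.cast_sub hk]
    exact_mod_cast (Nat.choose_succ_right_eq n k).symm
  · simp [Nat.choose_eq_zero_of_lt hk, Nat.choose_eq_zero_of_lt (hk.trans k.lt_succ_self)]

theorem binomialWeight_mul_sub_div_succ (n k : ℕ) {x : K} (hx : x ≠ 0) :
    binomialWeight n x k * ((n - k) / (k + 1)) = (1 - x) / x * binomialWeight n x (k + 1) := by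
  calc binomialWeight n x k * ((n - k) / (k + 1))
      = n.choose k * ((n - k) / (k + 1)) * x ^ k * (1 - x) ^ (n - k) := by
        unfold binomialWeight; ring
    _ = n.choose (k + 1) * x ^ k * (1 - x) ^ (n - k) := by rw [cast_choose_mul_sub_div_succ]
    _ = (1 - x) / x * binomialWeight n x (k + 1) := by
        rcases lt_or_ge k n with hk | hk
        · rw [binomialWeight, show n - k = n - (k + 1) + 1 by omega]
          field_simp
          ring
        · rw [binomialWeight_eq_zero_of_lt x (Nat.lt_succ_of_le hk),
            Nat.choose_eq_zero_of_lt (Nat.lt_succ_of_le hk)]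
          simp

end Field

theorem binom_expectation_sub_div_succ_general (n : ℕ) (x : ℝ) (hx : 0 < x) :
    ∑ k ∈ Finset.range (n + 1),
      (n.choose k : ℝ) * x ^ k * (1 - x) ^ (n - k) * (((n : ℝ) - k) / ((k : ℝ) + 1))
      = ((1 - x) / x) * (1 - (1 - x) ^ n) := by
  rw [← sum_range_binomialWeight_succ, mul_sum]
  exact sum_congr rfl fun k _ => binomialWeight_mul_sub_div_succ n k hx.ne'

/-- Binomial expectation of (n−X)/(X+1): for a binomial random variable X with
parameters n and x (0 < x ≤ 1),
∑_{k=0}^{n} C(n,k)·x^k·(1−x)^{n−k}·(n−k)/(k+1) = ((1−x)/x)·(1 − (1−x)^n). -/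
theorem binom_expectation_sub_div_succ (n : ℕ) (x : ℝ) (hx : 0 < x) (hx1 : x ≤ 1) :
    ∑ k ∈ Finset.range (n + 1),
      (n.choose k : ℝ) * x ^ k * (1 - x) ^ (n - k) * (((n : ℝ) - k) / ((k : ℝ) + 1))
      = ((1 - x) / x) * (1 - (1 - x) ^ n) :=
  binom_expectation_sub_div_succ_general n x hx
end

section
/- For every natural number n and every real x with 0 ≤ x < 1, ∑_{k=0}^{n} C(n,k) · x^k · (1−x)^{n−k} · k/(n+1−k) = (x/(1−x)) · (1 − x^{n}). -/
/-! The absorption identity `C(n, j+1) · (j+1) = C(n, j) · (n-j)` turns the term of index `j+1`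
into `x / (1-x)` times the binomial probability of `j`, and the binomial probabilities of
`j < n` add up to `1 - x ^ n`. -/

open Finset

theorem sum_range_choose_mul_pow_mul_pow_sub {R : Type*} [CommRing R] (n : ℕ) (x : R) :
    ∑ j ∈ range n, (n.choose j : R) * x ^ j * (1 - x) ^ (n - j) = 1 - x ^ n := by
  have h := add_pow x (1 - x) n
  rw [add_sub_cancel, one_pow, sum_range_succ, Nat.choose_self, Nat.sub_self, pow_zero,
    mul_one, Nat.cast_one, mul_one] at h
  rw [sum_congr rfl fun j _ => mul_rotate (n.choose j : R) (x ^ j) ((1 - x) ^ (n - j))]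
  linear_combination -h

theorem Nat.cast_choose_succ_mul_div {K : Type*} [Field K] [CharZero K] {n j : ℕ} (hj : j < n) :
    (n.choose (j + 1) : K) * ((j + 1) / (n + 1 - (j + 1))) = n.choose j := by
  have hnj : (n : K) - j ≠ 0 := sub_ne_zero.mpr (Nat.cast_injective.ne hj.ne')
  have hchoose : (n.choose (j + 1) : K) * (j + 1) = n.choose j * (n - j) := by
    have h := congrArg (Nat.cast : ℕ → K) (Nat.choose_succ_right_eq n j)
    push_cast [Nat.cast_sub hj.le] at h
    exact h
  rw [add_sub_add_right_eq_sub, ← mul_div_assoc, hchoose, mul_div_cancel_right₀ _ hnj]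

theorem choose_mul_pow_mul_pow_sub_mul_div_succ {K : Type*} [Field K] [CharZero K]
    {n j : ℕ} (hj : j < n) {x : K} (hx : x ≠ 1) :
    (n.choose (j + 1) : K) * x ^ (j + 1) * (1 - x) ^ (n - (j + 1)) * ((j + 1) / (n + 1 - (j + 1)))
      = x / (1 - x) * ((n.choose j : K) * x ^ j * (1 - x) ^ (n - j)) := by
  have h1x : (1 : K) - x ≠ 0 := sub_ne_zero.mpr hx.symm
  have hpow : (1 - x) ^ (n - j) = (1 - x) ^ (n - (j + 1)) * (1 - x) := by
    rw [← pow_succ, Nat.sub_add_eq, Nat.sub_add_cancel (Nat.sub_pos_of_lt hj)]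
  rw [hpow, ← Nat.cast_choose_succ_mul_div hj]
  field_simp
  ring

theorem binom_expectation_div_sub_general (n : ℕ) (x : ℝ) (hx1 : x < 1) :
    ∑ k ∈ Finset.range (n + 1),
      (n.choose k : ℝ) * x ^ k * (1 - x) ^ (n - k) * ((k : ℝ) / ((n : ℝ) + 1 - k))
      = (x / (1 - x)) * (1 - x ^ n) := by
  rw [sum_range_succ', ← sum_range_choose_mul_pow_mul_pow_sub, mul_sum]
  simp only [Nat.cast_zero, zero_div, mul_zero, add_zero, Nat.cast_add, Nat.cast_one]
  exact sum_congr rfl fun j hj =>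
    choose_mul_pow_mul_pow_sub_mul_div_succ (mem_range.mp hj) hx1.ne

/-- Binomial expectation of X/(n+1−X): for a binomial random variable X with
parameters n and x (0 ≤ x < 1),
∑_{k=0}^{n} C(n,k)·x^k·(1−x)^{n−k}·k/(n+1−k) = (x/(1−x))·(1 − x^n). -/
theorem binom_expectation_div_sub (n : ℕ) (x : ℝ) (hx : 0 ≤ x) (hx1 : x < 1) :
    ∑ k ∈ Finset.range (n + 1),
      (n.choose k : ℝ) * x ^ k * (1 - x) ^ (n - k) * ((k : ℝ) / ((n : ℝ) + 1 - k))
      = (x / (1 - x)) * (1 - x ^ n) :=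
  binom_expectation_div_sub_general n x hx1
end

section
/- For every real x with 0 < x ≤ 1, the average payoff of cooperators in the IPGG satisfies f_C(x) = b + F·c·((N−1)·x + 1)/N − c − τ − α·β·τ·r_p · (1 − (1−x)^{N−1})/x. -/
/-- IPGG payoff of a focal cooperator when k of the other N−1 group members cooperate. -/
noncomputable def piC (N : ℕ) (b c τ β rp α F : ℝ) (k : ℕ) : ℝ :=
  b + F * c * ((k : ℝ) + 1) / N - c - τ -
    α * β * τ * rp * ((if 1 ≤ k then (1 : ℝ) else 0) + ((N : ℝ) - 1 - k) / ((k : ℝ) + 1))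

/-!
The weight of `k` cooperators among the `n = N - 1` co-players is the Bernstein polynomial
`B_{n,k}(x)`, so `f_C(x)` is an expectation against the binomial distribution. The constant and
linear parts of `π_C` give `∑ B_{n,k} = 1` and `∑ k B_{n,k} = n x`. For the punishment part,
`(n - k)/(k + 1) · B_{n,k}(x) = (1 - x)/x · B_{n,k+1}(x)`, so both punishment terms sum to
multiples of `1 - B_{n,0}(x) = 1 - (1 - x)^n`, and `1 + (1 - x)/x = 1/x`.
-/

open Finset Polynomial

namespace bernsteinPolynomial

section CommRing

variable {R : Type*} [CommRing R] (n : ℕ) (x : R)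

theorem eval_eq (k : ℕ) :
    (bernsteinPolynomial R n k).eval x = n.choose k * x ^ k * (1 - x) ^ (n - k) := by
  simp [bernsteinPolynomial]

theorem sum_eval : ∑ k ∈ range (n + 1), (bernsteinPolynomial R n k).eval x = 1 := by
  simpa [eval_finsetSum] using congrArg (eval x) (bernsteinPolynomial.sum R n)

theorem sum_natCast_mul_eval :
    ∑ k ∈ range (n + 1), (k : R) * (bernsteinPolynomial R n k).eval x = n * x := by
  simpa [eval_finsetSum, nsmul_eq_mul] using congrArg (eval x) (bernsteinPolynomial.sum_smul R n)

theorem sum_eval_succ :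
    ∑ k ∈ range n, (bernsteinPolynomial R n (k + 1)).eval x = 1 - (1 - x) ^ n := by
  have h := sum_eval n x
  rw [sum_range_succ', eval_eq n x 0] at h
  simp only [Nat.choose_zero_right, Nat.cast_one, pow_zero, one_mul, Nat.sub_zero] at h
  exact eq_sub_of_add_eq h

theorem mul_sub_mul_eval {k : ℕ} (hk : k ≤ n) :
    x * (((n : R) - k) * (bernsteinPolynomial R n k).eval x)
      = (k + 1) * ((1 - x) * (bernsteinPolynomial R n (k + 1)).eval x) := by
  obtain rfl | hlt := hk.eq_or_lt
  · simp [eq_zero_of_lt R (Nat.lt_succ_self k)]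
  have hchoose : (n.choose (k + 1) : R) * (k + 1) = n.choose k * ((n : R) - k) := by
    rw [← Nat.cast_sub hk]
    exact_mod_cast congrArg (Nat.cast : ℕ → R) (Nat.choose_succ_right_eq n k)
  have hpow : (1 - x) ^ (n - k) = (1 - x) * (1 - x) ^ (n - (k + 1)) := by
    rw [← pow_succ', Nat.sub_add_eq, Nat.sub_add_cancel (Nat.sub_pos_of_lt hlt)]
  rw [eval_eq, eval_eq, hpow, pow_succ]
  linear_combination (x * x ^ k * ((1 - x) * (1 - x) ^ (n - (k + 1)))) * hchoose.symm

theorem sum_ite_one_le_mul_eval :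
    ∑ k ∈ range (n + 1), (if 1 ≤ k then (1 : R) else 0) * (bernsteinPolynomial R n k).eval x
      = 1 - (1 - x) ^ n := by
  rw [sum_range_succ', ← sum_eval_succ n x]
  simp

end CommRing

section Field

variable {K : Type*} [Field K] [CharZero K] (n : ℕ) {x : K}

theorem sub_div_mul_eval (hx : x ≠ 0) {k : ℕ} (hk : k ≤ n) :
    ((n : K) - k) / (k + 1) * (bernsteinPolynomial K n k).eval x
      = (1 - x) / x * (bernsteinPolynomial K n (k + 1)).eval x := by
  have hk1 : (k : K) + 1 ≠ 0 := Nat.cast_add_one_ne_zero k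
  field_simp
  linear_combination mul_sub_mul_eval n x hk

theorem sum_sub_div_mul_eval (hx : x ≠ 0) :
    ∑ k ∈ range (n + 1), ((n : K) - k) / (k + 1) * (bernsteinPolynomial K n k).eval x
      = (1 - x) / x * (1 - (1 - x) ^ n) := by
  rw [sum_congr rfl fun k hk => sub_div_mul_eval n hx (mem_range_succ_iff.mp hk), ← mul_sum,
    sum_range_succ, eq_zero_of_lt K (Nat.lt_succ_self n), eval_zero, add_zero, sum_eval_succ]

theorem sum_ite_one_le_add_sub_div_mul_eval (hx : x ≠ 0) :
    ∑ k ∈ range (n + 1),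
      ((if 1 ≤ k then (1 : K) else 0) + ((n : K) - k) / (k + 1))
        * (bernsteinPolynomial K n k).eval x
      = (1 - (1 - x) ^ n) / x := by
  simp only [add_mul, sum_add_distrib, sum_ite_one_le_mul_eval, sum_sub_div_mul_eval n hx]
  field_simp
  ring

end Field

end bernsteinPolynomial

open bernsteinPolynomial in
theorem ipgg_avg_payoff_cooperators_general (N : ℕ) (hN : 2 ≤ N) (b c τ β rp α F : ℝ)
    (x : ℝ) (hx : 0 < x) :
    ∑ k ∈ Finset.range N,
      ((N - 1).choose k : ℝ) * x ^ k * (1 - x) ^ (N - 1 - k) * piC N b c τ β rp α F k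
      = b + F * c * (((N : ℝ) - 1) * x + 1) / N - c - τ -
        α * β * τ * rp * (1 - (1 - x) ^ (N - 1)) / x := by
  obtain ⟨n, rfl⟩ : ∃ n, N = n + 1 := ⟨N - 1, by omega⟩
  have hterm : ∀ k ∈ range (n + 1),
      ((n + 1 - 1).choose k : ℝ) * x ^ k * (1 - x) ^ (n + 1 - 1 - k)
          * piC (n + 1) b c τ β rp α F k
        = (b + F * c / (n + 1) - c - τ) * (bernsteinPolynomial ℝ n k).eval x
          + F * c / (n + 1) * (k * (bernsteinPolynomial ℝ n k).eval x)
          - α * β * τ * rp * (((if 1 ≤ k then (1 : ℝ) else 0) + ((n : ℝ) - k) / (k + 1))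
              * (bernsteinPolynomial ℝ n k).eval x) := by
    intro k _
    simp only [eval_eq, Nat.add_sub_cancel, piC]
    push_cast
    ring
  rw [sum_congr rfl hterm, sum_sub_distrib, sum_add_distrib, ← mul_sum, ← mul_sum, ← mul_sum,
    sum_eval, sum_natCast_mul_eval, sum_ite_one_le_add_sub_div_mul_eval n hx.ne']
  push_cast
  field_simp
  ring

/-- Average payoff of cooperators in the IPGG at cooperator frequency x ∈ (0,1]:
f_C(x) = b + F·c·((N−1)·x + 1)/N − c − τ − α·β·τ·r_p·(1 − (1−x)^{N−1})/x. -/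
theorem ipgg_avg_payoff_cooperators (N : ℕ) (hN : 2 ≤ N) (b c τ β rp α F : ℝ)
    (hc : 0 < c) (hτ : 0 < τ) (hβ : 0 < β) (hrp : 0 < rp) (hα0 : 0 ≤ α) (hα1 : α ≤ 1)
    (x : ℝ) (hx : 0 < x) (hx1 : x ≤ 1) :
    ∑ k ∈ Finset.range N,
      ((N - 1).choose k : ℝ) * x ^ k * (1 - x) ^ (N - 1 - k) * piC N b c τ β rp α F k
      = b + F * c * (((N : ℝ) - 1) * x + 1) / N - c - τ -
        α * β * τ * rp * (1 - (1 - x) ^ (N - 1)) / x :=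
  ipgg_avg_payoff_cooperators_general N hN b c τ β rp α F x hx
end

section
/- For every real x with 0 ≤ x < 1, the average payoff of defectors in the IPGG satisfies f_D(x) = b + F·c·(N−1)·x/N − τ − (1−α)·β·τ·r_p · (1 − x^{N−1})/(1−x). -/
/-!
Write the defector payoff as `b - τ + (F c / N) k - (1 - α) β τ r_p w_k` with punishment weight
`w_k = k / (N - k) + [k < N - 1]`. Against the binomial weights of degree `n = N - 1`, the Bernstein
identities give the expectations `1` and `n x` of `1` and `k`. For the punishment term,
`C(n, k) (k / (n + 1 - k) + 1) = C(n + 1, k)` turns the sum into the binomial expansion of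
`(x + (1 - x)) ^ (n + 1) = 1` with its two top terms missing, up to one factor `1 - x`; after
multiplying by `1 - x` everything telescopes to `1 - x ^ n`.
-/

/-- IPGG payoff of a focal defector when k of the other N−1 group members cooperate. -/
noncomputable def piD (N : ℕ) (b c τ β rp α F : ℝ) (k : ℕ) : ℝ :=
  b + F * c * (k : ℝ) / N - τ -
    (1 - α) * β * τ * rp * ((k : ℝ) / ((N : ℝ) - k) + (if k ≤ N - 2 then (1 : ℝ) else 0))

open Finset Polynomial

section CommRing

variable {R : Type*} [CommRing R]

lemma eval_bernsteinPolynomial (n k : ℕ) (x : R) :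
    (bernsteinPolynomial R n k).eval x = n.choose k * x ^ k * (1 - x) ^ (n - k) := by
  simp [bernsteinPolynomial]

lemma sum_choose_mul_pow_mul_pow (n : ℕ) (x : R) :
    ∑ k ∈ range (n + 1), (n.choose k : R) * x ^ k * (1 - x) ^ (n - k) = 1 := by
  simpa [eval_finsetSum, eval_bernsteinPolynomial] using
    congrArg (eval x) (bernsteinPolynomial.sum R n)

lemma sum_choose_mul_pow_mul_pow_mul_cast (n : ℕ) (x : R) :
    ∑ k ∈ range (n + 1), (n.choose k : R) * x ^ k * (1 - x) ^ (n - k) * k = n * x := by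
  simpa [eval_finsetSum, eval_bernsteinPolynomial, mul_comm] using
    congrArg (eval x) (bernsteinPolynomial.sum_smul R n)

lemma sum_range_choose_succ_mul_pow_mul_pow (n : ℕ) (x : R) :
    ∑ k ∈ range n, ((n + 1).choose k : R) * x ^ k * (1 - x) ^ (n + 1 - k)
      = 1 - (n + 1) * x ^ n * (1 - x) - x ^ (n + 1) := by
  have h := sum_choose_mul_pow_mul_pow (n + 1) x
  rw [sum_range_succ, sum_range_succ, Nat.choose_succ_self_right, Nat.choose_self,
    Nat.add_sub_cancel_left, Nat.sub_self] at h
  push_cast at h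
  linear_combination h

end CommRing

section Field

variable {K : Type*} [Field K] [CharZero K]

lemma cast_choose_mul_div_add_one {n k : ℕ} (hk : k ≤ n) :
    (n.choose k : K) * (k / (n + 1 - k) + 1) = (n + 1).choose k := by
  have hcast : ((n + 1 - k : ℕ) : K) = n + 1 - k := by push_cast [hk.trans n.le_succ]; ring
  have hpos : (n + 1 - k : K) ≠ 0 := by rw [← hcast]; exact_mod_cast (by omega : n + 1 - k ≠ 0)
  have hchoose : (n.choose k : K) * (n + 1) = (n + 1).choose k * (n + 1 - k) := by
    rw [← hcast]; exact_mod_cast Nat.choose_mul_succ_eq n k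
  rw [div_add_one hpos, mul_div_assoc', div_eq_iff hpos]
  linear_combination hchoose

lemma sum_choose_mul_pow_mul_pow_mul_punishment (n : ℕ) (x : K) :
    ∑ k ∈ range (n + 1), (n.choose k : K) * x ^ k * (1 - x) ^ (n - k) *
        (k / (n + 1 - k) + if k < n then 1 else 0)
      = ∑ k ∈ range n, ((n + 1).choose k : K) * x ^ k * (1 - x) ^ (n - k) + n * x ^ n := by
  rw [sum_range_succ]
  congr 1
  · refine sum_congr rfl fun k hk => ?_
    rw [if_pos (mem_range.mp hk), ← cast_choose_mul_div_add_one (mem_range.mp hk).le]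
    ring
  · simp [mul_comm]

lemma one_sub_mul_sum_choose_mul_pow_mul_pow_mul_punishment (n : ℕ) (x : K) :
    (1 - x) * ∑ k ∈ range (n + 1), (n.choose k : K) * x ^ k * (1 - x) ^ (n - k) *
        (k / (n + 1 - k) + if k < n then 1 else 0) = 1 - x ^ n := by
  have h := sum_range_choose_succ_mul_pow_mul_pow n x
  rw [sum_congr rfl fun k hk => by rw [Nat.succ_sub (mem_range.mp hk).le, pow_succ, ← mul_assoc]]
    at h
  rw [sum_choose_mul_pow_mul_pow_mul_punishment, mul_comm, add_mul, sum_mul]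
  linear_combination h

end Field

lemma piD_succ {n : ℕ} (hn : 1 ≤ n) (b c τ β rp α F : ℝ) (k : ℕ) :
    piD (n + 1) b c τ β rp α F k = b - τ + F * c / (n + 1) * k -
      (1 - α) * β * τ * rp * (k / (n + 1 - k) + if k < n then 1 else 0) := by
  have hind : (k ≤ n + 1 - 2) ↔ k < n := by omega
  simp only [piD, hind]
  push_cast
  ring

theorem ipgg_avg_payoff_defectors_general (N : ℕ) (hN : 2 ≤ N) (b c τ β rp α F : ℝ)
    (x : ℝ) (hx1 : x < 1) :
    ∑ k ∈ Finset.range N,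
      ((N - 1).choose k : ℝ) * x ^ k * (1 - x) ^ (N - 1 - k) * piD N b c τ β rp α F k
      = b + F * c * ((N : ℝ) - 1) * x / N - τ -
        (1 - α) * β * τ * rp * (1 - x ^ (N - 1)) / (1 - x) := by
  obtain ⟨n, rfl⟩ : ∃ n, N = n + 1 := ⟨N - 1, by omega⟩
  have h1x : 1 - x ≠ 0 := sub_ne_zero.mpr hx1.ne'
  have hpunish := one_sub_mul_sum_choose_mul_pow_mul_pow_mul_punishment n x
  rw [mul_comm, ← eq_div_iff h1x] at hpunish
  rw [Nat.add_sub_cancel]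
  calc _ = (b - τ) * ∑ k ∈ range (n + 1), (n.choose k : ℝ) * x ^ k * (1 - x) ^ (n - k)
        + F * c / (n + 1) * ∑ k ∈ range (n + 1), (n.choose k : ℝ) * x ^ k * (1 - x) ^ (n - k) * k
        - (1 - α) * β * τ * rp * ∑ k ∈ range (n + 1), (n.choose k : ℝ) * x ^ k * (1 - x) ^ (n - k)
          * (k / (n + 1 - k) + if k < n then 1 else 0) := by
        simp only [mul_sum, ← sum_add_distrib, ← sum_sub_distrib, piD_succ (by omega : 1 ≤ n)]
        exact sum_congr rfl fun k _ => by ring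
    _ = _ := by
        rw [sum_choose_mul_pow_mul_pow, sum_choose_mul_pow_mul_pow_mul_cast, hpunish]
        push_cast
        field_simp
        ring

/-- Average payoff of defectors in the IPGG at cooperator frequency x ∈ [0,1):
f_D(x) = b + F·c·(N−1)·x/N − τ − (1−α)·β·τ·r_p·(1 − x^{N−1})/(1−x). -/
theorem ipgg_avg_payoff_defectors (N : ℕ) (hN : 2 ≤ N) (b c τ β rp α F : ℝ)
    (hc : 0 < c) (hτ : 0 < τ) (hβ : 0 < β) (hrp : 0 < rp) (hα0 : 0 ≤ α) (hα1 : α ≤ 1)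
    (x : ℝ) (hx : 0 ≤ x) (hx1 : x < 1) :
    ∑ k ∈ Finset.range N,
      ((N - 1).choose k : ℝ) * x ^ k * (1 - x) ^ (N - 1 - k) * piD N b c τ β rp α F k
      = b + F * c * ((N : ℝ) - 1) * x / N - τ -
        (1 - α) * β * τ * rp * (1 - x ^ (N - 1)) / (1 - x) :=
  ipgg_avg_payoff_defectors_general N hN b c τ β rp α F x hx1
end

section
/- The IPGG gradient function Q is strictly increasing on the interval [0,1]; equivalently, for all x, y ∈ [0,1] with x < y one has Q(x) < Q(y). -/
/-!
Write `S x = ∑_{k<N-1} x^(k+1)` and `K = β τ r_p > 0`. Up to an additive constant,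
`Q x = K ((1 - α) S x + α (-S (1 - x)))`. Both `S` and `x ↦ -S (1 - x)` are strictly increasing
on `[0, 1]` once `N ≥ 2`, and the weights `1 - α` and `α` are nonnegative and sum to `1`.
-/

/-- The IPGG gradient function Q. -/
noncomputable def Qipgg (N : ℕ) (c τ β rp α F : ℝ) (x : ℝ) : ℝ :=
  F * c / N - c - 2 * α * β * τ * rp + β * τ * rp
    - α * β * τ * rp * (∑ k ∈ Finset.range (N - 1), (1 - x) ^ (k + 1))
    + (1 - α) * β * τ * rp * (∑ k ∈ Finset.range (N - 1), x ^ (k + 1))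

open Finset Set

theorem strictMonoOn_sum_range_pow_succ {R : Type*} [Semiring R] [PartialOrder R]
    [IsStrictOrderedRing R] {n : ℕ} (hn : n ≠ 0) :
    StrictMonoOn (fun x : R => ∑ k ∈ range n, x ^ (k + 1)) (Ici 0) :=
  fun _ ha _ _ hab =>
    sum_lt_sum_of_nonempty (nonempty_range_iff.2 hn) fun k _ => pow_lt_pow_left₀ hab ha k.succ_ne_zero

theorem StrictMonoOn.mul_add_mul {R β : Type*} [Semiring R] [PartialOrder R]
    [IsStrictOrderedRing R] [Preorder β] {f g : β → R} {s : Set β} (hf : StrictMonoOn f s)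
    (hg : StrictMonoOn g s) {a b : R} (ha : 0 ≤ a) (hb : 0 ≤ b) (hab : 0 < a + b) :
    StrictMonoOn (fun x => a * f x + b * g x) s := by
  intro x hx y hy hxy
  rcases ha.eq_or_lt with rfl | ha
  · rw [zero_add] at hab
    simpa using mul_lt_mul_of_pos_left (hg hx hy hxy) hab
  · exact add_lt_add_of_lt_of_le (mul_lt_mul_of_pos_left (hf hx hy hxy) ha)
      (mul_le_mul_of_nonneg_left (hg hx hy hxy).le hb)

theorem ipgg_Q_strictMonoOn_general (N : ℕ) (hN : 2 ≤ N) (c τ β rp α F : ℝ)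
    (hτ : 0 < τ) (hβ : 0 < β) (hrp : 0 < rp) (hα0 : 0 ≤ α) (hα1 : α ≤ 1) :
    ∀ x ∈ Set.Icc (0 : ℝ) 1, ∀ y ∈ Set.Icc (0 : ℝ) 1, x < y →
      Qipgg N c τ β rp α F x < Qipgg N c τ β rp α F y := by
  set S := fun x : ℝ => ∑ k ∈ range (N - 1), x ^ (k + 1)
  have hS : StrictMonoOn S (Ici 0) := strictMonoOn_sum_range_pow_succ (by omega)
  have hS_reflect : StrictMonoOn (fun x => -S (1 - x)) (Icc 0 1) :=
    fun x hx y hy hxy => neg_lt_neg <|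
      hS (show (0 : ℝ) ≤ 1 - y by linarith [hy.2]) (show (0 : ℝ) ≤ 1 - x by linarith [hx.2])
        (by linarith)
  have hcomb := hS_reflect.mul_add_mul (hS.mono Icc_subset_Ici_self) hα0 (sub_nonneg.2 hα1)
    (by norm_num)
  intro x hx y hy hxy
  have hK : 0 < β * τ * rp := by positivity
  have := mul_lt_mul_of_pos_left (hcomb hx hy hxy) hK
  simp only [Qipgg]
  linarith

/-- The IPGG gradient function Q is strictly increasing on [0,1]:
for all x, y ∈ [0,1] with x < y one has Q(x) < Q(y). -/
theorem ipgg_Q_strictMonoOn (N : ℕ) (hN : 2 ≤ N) (c τ β rp α F : ℝ)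
    (hc : 0 < c) (hτ : 0 < τ) (hβ : 0 < β) (hrp : 0 < rp) (hα0 : 0 ≤ α) (hα1 : α ≤ 1) :
    ∀ x ∈ Set.Icc (0 : ℝ) 1, ∀ y ∈ Set.Icc (0 : ℝ) 1, x < y →
      Qipgg N c τ β rp α F x < Qipgg N c τ β rp α F y :=
  ipgg_Q_strictMonoOn_general N hN c τ β rp α F hτ hβ hrp hα0 hα1
end

section
/- If F < F_min, then Q(x) < 0 for all x ∈ (0,1]; in particular the replicator dynamics ẋ = x(1−x)Q(x) has no interior equilibrium in (0,1), the gradient of selection x(1−x)Q(x) is negative on (0,1), and the population evolves toward full defection (x = 0 is the attracting boundary state). -/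
/-- The lower threshold F_min for the pool multiplier in the IPGG. -/
noncomputable def Fmin (N : ℕ) (c τ β rp α : ℝ) : ℝ :=
  N * (c - β * τ * rp + 2 * α * β * τ * rp - (1 - α) * β * τ * rp * ((N : ℝ) - 1)) / c

/-- The upper threshold F_max for the pool multiplier in the IPGG. -/
noncomputable def Fmax (N : ℕ) (c τ β rp α : ℝ) : ℝ :=
  N * (c - β * τ * rp + α * β * τ * rp * ((N : ℝ) + 1)) / c

/-!
`Q` is nondecreasing on `[0, 1]`: as `x` grows the sum of powers of `1 - x`, which enters with the
weight `-α β τ r_p ≤ 0`, decreases, and the sum of powers of `x`, with weight `(1 - α) β τ r_p ≥ 0`,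
increases. Its largest value `Q(1)` works out to `c / N · (F - F_min)`, which is negative exactly
when `F < F_min`.
-/

open Finset Set

theorem sum_range_pow_succ_le_sum_range_pow_succ {R : Type*} [Semiring R] [PartialOrder R]
    [IsOrderedRing R] {x y : R} (hx : 0 ≤ x) (hxy : x ≤ y) (n : ℕ) :
    ∑ k ∈ range n, x ^ (k + 1) ≤ ∑ k ∈ range n, y ^ (k + 1) :=
  sum_le_sum fun k _ ↦ pow_le_pow_left₀ hx hxy (k + 1)

theorem Qipgg_monotoneOn (N : ℕ) {c τ β rp α F : ℝ} (hX : 0 ≤ β * τ * rp)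
    (hα0 : 0 ≤ α) (hα1 : α ≤ 1) : MonotoneOn (Qipgg N c τ β rp α F) (Icc 0 1) := by
  intro x ⟨hx0, _⟩ y ⟨_, hy1⟩ hxy
  have hdefectors := sum_range_pow_succ_le_sum_range_pow_succ (sub_nonneg.2 hy1)
    (sub_le_sub_left hxy 1) (N - 1)
  have hcooperators := sum_range_pow_succ_le_sum_range_pow_succ hx0 hxy (N - 1)
  have hwα : 0 ≤ α * β * τ * rp := by simpa only [mul_assoc] using mul_nonneg hα0 hX
  have hw1α : 0 ≤ (1 - α) * β * τ * rp := by
    simpa only [mul_assoc] using mul_nonneg (sub_nonneg.2 hα1) hX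
  unfold Qipgg
  linarith [mul_le_mul_of_nonneg_left hdefectors hwα, mul_le_mul_of_nonneg_left hcooperators hw1α]

theorem Qipgg_one {N : ℕ} (hN : 1 ≤ N) {c : ℝ} (hc : c ≠ 0) (τ β rp α F : ℝ) :
    Qipgg N c τ β rp α F 1 = c / N * (F - Fmin N c τ β rp α) := by
  have hN0 : (N : ℝ) ≠ 0 := by positivity
  simp only [Qipgg, Fmin, sub_self, ne_eq, Nat.add_one_ne_zero, not_false_eq_true, zero_pow,
    sum_const_zero, mul_zero, one_pow, sum_const, card_range, nsmul_eq_mul, mul_one,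
    Nat.cast_sub hN, Nat.cast_one]
  field_simp
  ring

/-- If F < F_min then Q(x) < 0 on (0,1], the gradient of selection x(1−x)Q(x) is
negative on (0,1), and the replicator dynamics has no interior equilibrium:
the population evolves toward full defection. -/
theorem ipgg_defection_dominance (N : ℕ) (hN : 2 ≤ N) (c τ β rp α F : ℝ)
    (hc : 0 < c) (hτ : 0 < τ) (hβ : 0 < β) (hrp : 0 < rp) (hα0 : 0 ≤ α) (hα1 : α ≤ 1)
    (hF : F < Fmin N c τ β rp α) :
    (∀ x : ℝ, 0 < x → x ≤ 1 → Qipgg N c τ β rp α F x < 0) ∧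
    (∀ x : ℝ, 0 < x → x < 1 → x * (1 - x) * Qipgg N c τ β rp α F x < 0) ∧
    ¬∃ x : ℝ, 0 < x ∧ x < 1 ∧ x * (1 - x) * Qipgg N c τ β rp α F x = 0 := by
  have hQ1 : Qipgg N c τ β rp α F 1 < 0 := by
    rw [Qipgg_one (by omega) hc.ne']
    exact mul_neg_of_pos_of_neg (by positivity) (sub_neg.2 hF)
  have hmono : MonotoneOn (Qipgg N c τ β rp α F) (Icc 0 1) :=
    Qipgg_monotoneOn N (by positivity) hα0 hα1
  have hQ : ∀ x : ℝ, 0 < x → x ≤ 1 → Qipgg N c τ β rp α F x < 0 := fun x hx0 hx1 ↦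
    (hmono ⟨hx0.le, hx1⟩ ⟨zero_le_one, le_rfl⟩ hx1).trans_lt hQ1
  have hgradient : ∀ x : ℝ, 0 < x → x < 1 → x * (1 - x) * Qipgg N c τ β rp α F x < 0 :=
    fun x hx0 hx1 ↦ mul_neg_of_pos_of_neg (mul_pos hx0 (sub_pos.2 hx1)) (hQ x hx0 hx1.le)
  exact ⟨hQ, hgradient, fun ⟨x, hx0, hx1, hzero⟩ ↦ (hgradient x hx0 hx1).ne hzero⟩
end

section
/- If F > F_max, then Q(x) > 0 for all x ∈ [0,1); in particular the replicator dynamics ẋ = x(1−x)Q(x) has no interior equilibrium in (0,1), the gradient of selection x(1−x)Q(x) is positive on (0,1), and the population evolves toward full cooperation (x = 1 is the attracting boundary state). -/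
/-!
Write `A = β τ r_p`. For `x ∈ [0, 1]` each term `(1 - x)^(k+1)` is at most `1` and each
`x^(k+1)` is nonnegative, so the defector-punishment sum costs at most `α A (N - 1)` and the
cooperator sum is a gain. What is left of `Q x` is exactly `(F - F_max) c / N`, which is positive
once `F > F_max`.
-/

open Finset

lemma sum_range_pow_succ_le_card {y : ℝ} (hy0 : 0 ≤ y) (hy1 : y ≤ 1) (n : ℕ) :
    ∑ k ∈ range n, y ^ (k + 1) ≤ n := by
  simpa using sum_le_card_nsmul (range n) (fun k => y ^ (k + 1)) 1
    fun k _ => pow_le_one₀ hy0 hy1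

lemma Fmax_mul_div {N : ℕ} (hN : N ≠ 0) {c : ℝ} (hc : c ≠ 0) (τ β rp α : ℝ) :
    Fmax N c τ β rp α * c / N = c - β * τ * rp + α * β * τ * rp * ((N : ℝ) + 1) := by
  have hN' : (N : ℝ) ≠ 0 := Nat.cast_ne_zero.mpr hN
  rw [Fmax]
  field_simp

lemma sub_Fmax_mul_div_le_Qipgg {N : ℕ} (hN : N ≠ 0) {c : ℝ} (hc : c ≠ 0) {τ β rp α : ℝ}
    (hA : 0 ≤ β * τ * rp) (hα0 : 0 ≤ α) (hα1 : α ≤ 1) (F : ℝ) {x : ℝ} (hx0 : 0 ≤ x)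
    (hx1 : x ≤ 1) :
    (F - Fmax N c τ β rp α) * c / N ≤ Qipgg N c τ β rp α F x := by
  have hdefect : ∑ k ∈ range (N - 1), (1 - x) ^ (k + 1) ≤ (N : ℝ) - 1 := by
    have := sum_range_pow_succ_le_card (sub_nonneg.mpr hx1) (by linarith) (N - 1)
    rwa [Nat.cast_pred (Nat.pos_of_ne_zero hN)] at this
  have hcoop : 0 ≤ ∑ k ∈ range (N - 1), x ^ (k + 1) :=
    sum_nonneg fun k _ => pow_nonneg hx0 _
  have hdefectWeight : 0 ≤ α * (β * τ * rp) := mul_nonneg hα0 hA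
  have hcoopWeight : 0 ≤ (1 - α) * (β * τ * rp) := mul_nonneg (sub_nonneg.mpr hα1) hA
  rw [sub_mul, sub_div, Fmax_mul_div hN hc, Qipgg]
  linarith [mul_le_mul_of_nonneg_left hdefect hdefectWeight, mul_nonneg hcoopWeight hcoop]

/-- If F > F_max then Q(x) > 0 on [0,1), the gradient of selection x(1−x)Q(x) is
positive on (0,1), and the replicator dynamics has no interior equilibrium:
the population evolves toward full cooperation. -/
theorem ipgg_cooperation_dominance (N : ℕ) (hN : 2 ≤ N) (c τ β rp α F : ℝ)
    (hc : 0 < c) (hτ : 0 < τ) (hβ : 0 < β) (hrp : 0 < rp) (hα0 : 0 ≤ α) (hα1 : α ≤ 1)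
    (hF : Fmax N c τ β rp α < F) :
    (∀ x : ℝ, 0 ≤ x → x < 1 → 0 < Qipgg N c τ β rp α F x) ∧
    (∀ x : ℝ, 0 < x → x < 1 → 0 < x * (1 - x) * Qipgg N c τ β rp α F x) ∧
    ¬∃ x : ℝ, 0 < x ∧ x < 1 ∧ x * (1 - x) * Qipgg N c τ β rp α F x = 0 := by
  have hN0 : N ≠ 0 := by omega
  have hmargin : 0 < (F - Fmax N c τ β rp α) * c / N :=
    div_pos (mul_pos (sub_pos.mpr hF) hc) (by positivity)
  have hQ : ∀ x : ℝ, 0 ≤ x → x < 1 → 0 < Qipgg N c τ β rp α F x := fun x hx0 hx1 =>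
    hmargin.trans_le
      (sub_Fmax_mul_div_le_Qipgg hN0 hc.ne' (by positivity) hα0 hα1 F hx0 hx1.le)
  have hgrad : ∀ x : ℝ, 0 < x → x < 1 → 0 < x * (1 - x) * Qipgg N c τ β rp α F x :=
    fun x hx0 hx1 => mul_pos (mul_pos hx0 (sub_pos.mpr hx1)) (hQ x hx0.le hx1)
  exact ⟨hQ, hgrad, fun ⟨x, hx0, hx1, hx⟩ => (hgrad x hx0 hx1).ne' hx⟩
end

section
/- Suppose F < N. The interior equilibrium of the IPGG decreases as the punishment multiplier increases: if 0 < r₁ < r₂ and, for i = 1, 2, the pool multiplier F satisfies F_min(r_i) < F < F_max(r_i), and x_i* ∈ (0,1) is a zero of Q_{r_i}, then x₂* < x₁*. (Hence a stronger leader enlarges the basin of attraction of full cooperation.) -/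
open Finset

noncomputable def punishmentGradient (N : ℕ) (α x : ℝ) : ℝ :=
  (1 - 2 * α) - α * ∑ k ∈ range (N - 1), (1 - x) ^ (k + 1)
    + (1 - α) * ∑ k ∈ range (N - 1), x ^ (k + 1)

lemma Qipgg_eq (N : ℕ) (c τ β rp α F x : ℝ) :
    Qipgg N c τ β rp α F x = F * c / N - c + β * τ * rp * punishmentGradient N α x := by
  unfold Qipgg punishmentGradient
  ring

lemma monotoneOn_sum_pow_succ (n : ℕ) :
    MonotoneOn (fun x : ℝ ↦ ∑ k ∈ range n, x ^ (k + 1)) (Set.Ici 0) :=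
  fun _ ha _ _ hab ↦ sum_le_sum fun _ _ ↦ pow_le_pow_left₀ ha hab _

lemma antitoneOn_sum_one_sub_pow_succ (n : ℕ) :
    AntitoneOn (fun x : ℝ ↦ ∑ k ∈ range n, (1 - x) ^ (k + 1)) (Set.Iic 1) :=
  fun _ _ _ hb hab ↦ sum_le_sum fun _ _ ↦
    pow_le_pow_left₀ (sub_nonneg.2 (Set.mem_Iic.1 hb)) (sub_le_sub_left hab 1) _

lemma monotoneOn_punishmentGradient (N : ℕ) {α : ℝ} (hα0 : 0 ≤ α) (hα1 : α ≤ 1) :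
    MonotoneOn (punishmentGradient N α) (Set.Icc 0 1) := by
  intro a ha b hb hab
  have hpos := monotoneOn_sum_pow_succ (N - 1) ha.1 hb.1 hab
  have hneg := antitoneOn_sum_one_sub_pow_succ (N - 1) ha.2 hb.2 hab
  unfold punishmentGradient
  gcongr ?_ - α * ?_ + ?_ * ?_

lemma punishmentGradient_eq_of_Qipgg_eq_zero {N : ℕ} {c τ β rp α F x : ℝ}
    (hβτr : β * τ * rp ≠ 0) (hQ : Qipgg N c τ β rp α F x = 0) :
    punishmentGradient N α x = (c - F * c / N) / (β * τ * rp) := by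
  rw [Qipgg_eq] at hQ
  rw [eq_div_iff hβτr]
  linear_combination hQ

theorem ipgg_equilibrium_decreasing_in_rp_general (N : ℕ) (hN : 2 ≤ N) (c τ β α F : ℝ)
    (hc : 0 < c) (hτ : 0 < τ) (hβ : 0 < β) (hα0 : 0 ≤ α) (hα1 : α ≤ 1)
    (hFN : F < (N : ℝ))
    (r₁ r₂ : ℝ) (hr₁ : 0 < r₁) (hr12 : r₁ < r₂)
    (x₁ x₂ : ℝ) (hx₁ : 0 < x₁) (hx₁' : x₁ < 1) (hx₂ : 0 < x₂) (hx₂' : x₂ < 1)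
    (hQ₁ : Qipgg N c τ β r₁ α F x₁ = 0) (hQ₂ : Qipgg N c τ β r₂ α F x₂ = 0) :
    x₂ < x₁ := by
  have hN0 : (0 : ℝ) < N := by exact_mod_cast (by omega : 0 < N)
  have hK : 0 < c - F * c / N := by
    rw [sub_pos, div_lt_iff₀ hN0]
    nlinarith
  have hβτr₁ : 0 < β * τ * r₁ := by positivity
  have hβτr : β * τ * r₁ < β * τ * r₂ := mul_lt_mul_of_pos_left hr12 (by positivity)
  have hG : punishmentGradient N α x₂ < punishmentGradient N α x₁ := by
    rw [punishmentGradient_eq_of_Qipgg_eq_zero (hβτr₁.trans hβτr).ne' hQ₂,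
      punishmentGradient_eq_of_Qipgg_eq_zero hβτr₁.ne' hQ₁]
    exact div_lt_div_of_pos_left hK hβτr₁ hβτr
  exact (monotoneOn_punishmentGradient N hα0 hα1).reflect_lt
    ⟨hx₂.le, hx₂'.le⟩ ⟨hx₁.le, hx₁'.le⟩ hG

/-- Suppose F < N. The interior equilibrium of the IPGG decreases as the punishment
multiplier increases: if 0 < r₁ < r₂, F_min(rᵢ) < F < F_max(rᵢ) for i = 1,2, and
xᵢ* ∈ (0,1) is a zero of Q_{rᵢ}, then x₂* < x₁*. -/
theorem ipgg_equilibrium_decreasing_in_rp (N : ℕ) (hN : 2 ≤ N) (c τ β α F : ℝ)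
    (hc : 0 < c) (hτ : 0 < τ) (hβ : 0 < β) (hα0 : 0 ≤ α) (hα1 : α ≤ 1)
    (hFN : F < (N : ℝ))
    (r₁ r₂ : ℝ) (hr₁ : 0 < r₁) (hr12 : r₁ < r₂)
    (hFlo₁ : Fmin N c τ β r₁ α < F) (hFhi₁ : F < Fmax N c τ β r₁ α)
    (hFlo₂ : Fmin N c τ β r₂ α < F) (hFhi₂ : F < Fmax N c τ β r₂ α)
    (x₁ x₂ : ℝ) (hx₁ : 0 < x₁) (hx₁' : x₁ < 1) (hx₂ : 0 < x₂) (hx₂' : x₂ < 1)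
    (hQ₁ : Qipgg N c τ β r₁ α F x₁ = 0) (hQ₂ : Qipgg N c τ β r₂ α F x₂ = 0) :
    x₂ < x₁ :=
  ipgg_equilibrium_decreasing_in_rp_general N hN c τ β α F hc hτ hβ hα0 hα1 hFN r₁ r₂ hr₁ hr12 x₁ x₂
    hx₁ hx₁' hx₂ hx₂' hQ₁ hQ₂
end
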